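/- arXiv:2212.09640 — 2 statements merged into one kernel-verified Lean document; each statement's English description precedes it below -/
import Mathlib

section
/- For the vertical lines ℓ_n = a_n + i F_{>0} in the Puiseux upper half-plane: if b ∈ F_{>0} with log(b) ≥ t_{n+1}, then d(a_n + ib, a_{n+1} + ib) = 0. -/
/-!
We model the field `F` of real Puiseux series inside the field of Hahn series
`HahnSeries ℚ ℝ`, via the exponent-reversing identification `X^t ↦ single (-t) 1`
(so that the paper's `X` is infinitely large and the leading-exponent logarithm
is `f ↦ -f.order`).  A Hahn series is a (real) Puiseux series iff its support
has bounded denominator.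
-/

noncomputable section

/-- The ambient Hahn series field. -/
abbrev Fh := HahnSeries ℚ ℝ

/-- The leading-exponent logarithm `log : F_{≠0} → ℚ` (junk value `0` at `0`). -/
def llog (f : Fh) : ℚ := -f.order

/-- The monomial `X^t` of the paper. -/
def Xp (t : ℚ) : Fh := HahnSeries.single (-t) 1

/-- `f` is a real Puiseux series: the denominators of its support are bounded. -/
def IsPuiseux (f : Fh) : Prop :=
  ∃ m : ℕ, 0 < m ∧ ∀ q ∈ f.support, ∃ k : ℤ, q = (k : ℚ) / m

/-- `f > 0` in the ordered field `F`: the leading coefficient is positive. -/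
def FPos (f : Fh) : Prop := f ≠ 0 ∧ 0 < f.coeff f.order

/-- `t n := -1 + 1/2^n`. -/
def tseq (n : ℕ) : ℚ := -1 + 1 / 2 ^ n

/-- `a n := ∑_{k=1}^n X^{t_k}`. -/
def aseq (n : ℕ) : Fh := ∑ k ∈ Finset.Icc 1 n, Xp (tseq k)

/-- `b n := X^{t_n}`. -/
def bseq (n : ℕ) : Fh := Xp (tseq n)

/-- Brumfiel's pseudo-distance on the upper half plane `H_F`:
`d(x+iy, x'+iy') = log (((x-x')² + y² + y'²)/(y y'))`. -/
def dH (x y x' y' : Fh) : ℚ := llog (((x - x') ^ 2 + y ^ 2 + y' ^ 2) / (y * y'))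

/-!
Since `a_{n+1} - a_n = X^{t_{n+1}}`, the numerator of the distance is
`X^{2 t_{n+1}} + 2 b²`, a sum of positive elements of `F`; its leading exponent is therefore
`max (2 t_{n+1}) (2 log b) = 2 log b`, the leading exponent of the denominator `b²`.
-/

namespace HahnSeries

theorem order_div {Γ K : Type*} [AddCommGroup Γ] [LinearOrder Γ] [IsOrderedAddMonoid Γ] [Field K]
    {f g : HahnSeries Γ K} (hf : f ≠ 0) (hg : g ≠ 0) : (f / g).order = f.order - g.order := by
  rw [eq_sub_iff_add_eq, ← order_mul (div_ne_zero hf hg) hg, div_mul_cancel₀ f hg]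

end HahnSeries

open HahnSeries

theorem fPos_iff {f : Fh} : FPos f ↔ f ≠ 0 ∧ 0 < f.leadingCoeff := by
  rw [FPos, leadingCoeff_eq]

theorem FPos.coeff_nonneg {f : Fh} (hf : FPos f) {q : ℚ} (hq : q ≤ f.order) : 0 ≤ f.coeff q := by
  rcases hq.lt_or_eq with hlt | rfl
  · rw [coeff_eq_zero_of_lt_order hlt]
  · exact hf.2.le

theorem FPos.sq {f : Fh} (hf : f ≠ 0) : FPos (f ^ 2) := by
  rw [fPos_iff, pow_two, leadingCoeff_mul]
  exact ⟨mul_ne_zero hf hf, mul_self_pos.mpr (leadingCoeff_ne_zero.mpr hf)⟩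

/-- In the ordered field `F`, the leading terms of positive elements cannot cancel. -/
theorem FPos.add {f g : Fh} (hf : FPos f) (hg : FPos g) :
    FPos (f + g) ∧ (f + g).order = min f.order g.order := by
  set m := min f.order g.order
  have hcoeff : 0 < (f + g).coeff m := by
    rw [coeff_add]
    obtain hm | hm : m = f.order ∨ m = g.order := min_choice _ _
    · exact add_pos_of_pos_of_nonneg (by rw [hm]; exact hf.2) (hg.coeff_nonneg (min_le_right _ _))
    · exact add_pos_of_nonneg_of_pos (hf.coeff_nonneg (min_le_left _ _)) (by rw [hm]; exact hg.2)
  have hne : f + g ≠ 0 := fun h => by simp [h] at hcoeff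
  have horder : (f + g).order = m :=
    le_antisymm (order_le_of_coeff_ne_zero hcoeff.ne') (min_order_le_order_add hne)
  exact ⟨⟨hne, horder ▸ hcoeff⟩, horder⟩

theorem llog_neg (f : Fh) : llog (-f) = llog f := by
  rw [llog, llog, order_neg]

theorem Xp_ne_zero (t : ℚ) : Xp t ≠ 0 :=
  single_ne_zero one_ne_zero

theorem llog_Xp (t : ℚ) : llog (Xp t) = t := by
  rw [llog, Xp, order_single one_ne_zero, neg_neg]

theorem aseq_sub_aseq_succ (n : ℕ) : aseq n - aseq (n + 1) = -Xp (tseq (n + 1)) := by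
  rw [aseq, aseq, Finset.sum_Icc_succ_top (by omega)]
  ring

theorem dH_eq_zero_of_llog_sub_le {x x' y : Fh} (hxx' : x ≠ x') (hy : FPos y)
    (h : llog (x - x') ≤ llog y) : dH x y x' y = 0 := by
  have hy_le : y.order ≤ (x - x').order := neg_le_neg_iff.mp h
  have hsq := FPos.sq (sub_ne_zero.mpr hxx')
  have hy2 := FPos.sq hy.1
  obtain ⟨hpos₁, horder₁⟩ := hsq.add hy2
  obtain ⟨hpos, horder⟩ := hpos₁.add hy2
  have hnum : ((x - x') ^ 2 + y ^ 2 + y ^ 2).order = 2 • y.order := by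
    rw [horder, horder₁, order_pow, order_pow]
    simpa using hy_le
  rw [dH, llog, order_div hpos.1 (mul_ne_zero hy.1 hy.1), hnum, order_mul hy.1 hy.1]
  simp only [two_nsmul, sub_self, neg_zero]

/-- If `b > 0` with `log b ≥ t_{n+1}`, then `d(a_n + ib, a_{n+1} + ib) = 0`. -/
theorem dist_zero_of_log_ge :
    ∀ (n : ℕ) (b : Fh), FPos b → tseq (n + 1) ≤ llog b →
      dH (aseq n) b (aseq (n + 1)) b = 0 := by
  intro n b hb hlog
  have hne : aseq n ≠ aseq (n + 1) := by
    rw [← sub_ne_zero, aseq_sub_aseq_succ, neg_ne_zero]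
    exact Xp_ne_zero _
  refine dH_eq_zero_of_llog_sub_le hne hb ?_
  rwa [aseq_sub_aseq_succ, llog_neg, llog_Xp]
end
end

section
/- There is no real Puiseux series a such that log|a - a_n| ≤ t_n for all n ∈ ℕ, where a_n = \sum_{k=1}^n X^{t_k} and t_n = -1 + 1/2^n. -/
/-!
We model the field `F` of real Puiseux series inside the field of Hahn series
`HahnSeries ℚ ℝ`, via the exponent-reversing identification `X^t ↦ single (-t) 1`
(so that the paper's `X` is infinitely large and the leading-exponent logarithm
is `f ↦ -f.order`).  A Hahn series is a (real) Puiseux series iff its support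
has bounded denominator.
-/

noncomputable section

/-!
If `a` were such a series, comparing coefficients with `aseq (k + 1)` would force the coefficient
of `a` at the exponent `1 - 1/2^k` to be `1` for every `k ≥ 1`. The denominators `2^k` of these
exponents are unbounded, while those of a Puiseux series all divide a fixed `m`; already `2^m ∤ m`.
-/

lemma tseq_strictAnti : StrictAnti tseq := fun i j hij => by
  have : (1 : ℚ) / 2 ^ j < 1 / 2 ^ i :=
    one_div_lt_one_div_of_lt (by positivity) (pow_lt_pow_right₀ one_lt_two hij)
  simpa [tseq] using this

lemma den_neg_tseq (n : ℕ) : (-tseq n).den = 2 ^ n := by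
  rw [Rat.den_neg_eq_den, tseq, one_div, show (-1 : ℚ) = ((-1 : ℤ) : ℚ) by norm_num,
    Rat.intCast_add_den, show (2 : ℚ) ^ n = ((2 ^ n : ℕ) : ℚ) by push_cast; rfl,
    Rat.inv_natCast_den_of_pos (by positivity)]

lemma IsPuiseux.exists_den_dvd {f : Fh} (hf : IsPuiseux f) :
    ∃ m : ℕ, 0 < m ∧ ∀ q ∈ f.support, q.den ∣ m := by
  obtain ⟨m, hm, hsupp⟩ := hf
  refine ⟨m, hm, fun q hq => ?_⟩
  obtain ⟨k, rfl⟩ := hsupp q hq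
  rw [← Int.natCast_dvd_natCast, ← Int.cast_natCast (R := ℚ) m, ← Rat.divInt_eq_div]
  exact Rat.den_dvd k m

lemma coeff_eq_of_eq_or_llog_sub_le {f g : Fh} {t q : ℚ} (h : f = g ∨ llog (f - g) ≤ t)
    (hq : q < -t) : f.coeff q = g.coeff q := by
  rcases h with rfl | h
  · rfl
  · rw [← sub_eq_zero, ← HahnSeries.coeff_sub]
    exact HahnSeries.coeff_eq_zero_of_lt_order (by unfold llog at h; linarith)

lemma coeff_aseq {n k : ℕ} (hk : k ∈ Finset.Icc 1 n) : (aseq n).coeff (-tseq k) = 1 := by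
  rw [aseq, HahnSeries.coeff_sum, Finset.sum_eq_single_of_mem k hk]
  · simp [Xp]
  · intro i _ hik
    rw [Xp, HahnSeries.coeff_single_of_ne]
    exact fun h => hik (tseq_strictAnti.injective (neg_inj.mp h).symm)

lemma coeff_neg_tseq_eq_one {a : Fh} (ha : ∀ n, a = aseq n ∨ llog (a - aseq n) ≤ tseq n)
    {k : ℕ} (hk : 1 ≤ k) : a.coeff (-tseq k) = 1 := by
  rw [coeff_eq_of_eq_or_llog_sub_le (ha (k + 1)) (neg_lt_neg (tseq_strictAnti k.lt_succ_self)),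
    coeff_aseq (Finset.mem_Icc.mpr ⟨hk, k.le_succ⟩)]

/-- There is no real Puiseux series `a` with `log |a - a_n| ≤ t_n` for all `n`
(where `log 0 = -∞`, so the condition reads `a = a_n` or `log (a - a_n) ≤ t_n`). -/
theorem no_puiseux_limit :
    ¬ ∃ a : Fh, IsPuiseux a ∧
      ∀ n : ℕ, a = aseq n ∨ llog (a - aseq n) ≤ tseq n := by
  rintro ⟨a, ha, hclose⟩
  obtain ⟨m, hm, hden⟩ := ha.exists_den_dvd
  have hmem : -tseq m ∈ a.support := by
    rw [HahnSeries.mem_support, coeff_neg_tseq_eq_one hclose hm]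
    exact one_ne_zero
  have h2m : 2 ^ m ∣ m := den_neg_tseq m ▸ hden _ hmem
  exact Nat.lt_two_pow_self.not_ge (Nat.le_of_dvd hm h2m)
end
end
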